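/- Let X and Y be Banach spaces. If (X × Y, K) has property L_{o,o} for bilinear forms, then every tensor in X ⊗π Y can be approximated in the projective norm by tensors which attain their projective norm; that is, NAπ(X ⊗π Y) is ‖·‖π-dense in X ⊗π Y. -/

import Mathlib

noncomputable section

open scoped BigOperators

/-- The predicate stating that the Banach space `Z`, together with the bounded bilinear map
`t : X → Y → Z` and the correspondence `lift` between operators `X → Y*` and functionals on `Z`,
realizes the projective tensor product `X ⊗π Y`.  The field `norm_eq_sInf` says that the norm of
`Z` is the projective norm: `‖z‖π = inf {∑ₙ ‖xₙ‖‖yₙ‖ : z = ∑ₙ xₙ ⊗ yₙ}`, and the `lift` fields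
encode the canonical isometric identification `(X ⊗π Y)* = L(X, Y*)`. -/
structure IsProjTensorProduct (X Y Z : Type*)
    [NormedAddCommGroup X] [NormedSpace ℝ X]
    [NormedAddCommGroup Y] [NormedSpace ℝ Y]
    [NormedAddCommGroup Z] [NormedSpace ℝ Z]
    (t : X →L[ℝ] Y →L[ℝ] Z)
    (lift : (X →L[ℝ] (Y →L[ℝ] ℝ)) → (Z →L[ℝ] ℝ)) : Prop where
  norm_tmul_le : ∀ (x : X) (y : Y), ‖t x y‖ ≤ ‖x‖ * ‖y‖
  exists_rep : ∀ z : Z, ∃ (x : ℕ → X) (y : ℕ → Y),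
    Summable (fun n => ‖x n‖ * ‖y n‖) ∧ HasSum (fun n => t (x n) (y n)) z
  norm_eq_sInf : ∀ z : Z, ‖z‖ = sInf {r : ℝ | ∃ (x : ℕ → X) (y : ℕ → Y),
    Summable (fun n => ‖x n‖ * ‖y n‖) ∧ HasSum (fun n => t (x n) (y n)) z ∧
    r = ∑' n, ‖x n‖ * ‖y n‖}
  lift_tmul : ∀ (G : X →L[ℝ] (Y →L[ℝ] ℝ)) (x : X) (y : Y), lift G (t x y) = G x y
  norm_lift : ∀ G : X →L[ℝ] (Y →L[ℝ] ℝ), ‖lift G‖ = ‖G‖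
  lift_surjective : Function.Surjective lift

/-- An element `z ∈ X ⊗π Y` attains its projective norm if it admits a representation
`z = ∑ₙ xₙ ⊗ yₙ` with `∑ₙ ‖xₙ‖‖yₙ‖ < ∞` and `‖z‖π = ∑ₙ ‖xₙ‖‖yₙ‖`. -/
def AttainsProjNorm {X Y Z : Type*}
    [NormedAddCommGroup X] [NormedSpace ℝ X]
    [NormedAddCommGroup Y] [NormedSpace ℝ Y]
    [NormedAddCommGroup Z] [NormedSpace ℝ Z]
    (t : X →L[ℝ] Y →L[ℝ] Z) (z : Z) : Prop :=
  ∃ (x : ℕ → X) (y : ℕ → Y),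
    Summable (fun n => ‖x n‖ * ‖y n‖) ∧ HasSum (fun n => t (x n) (y n)) z ∧
    ‖z‖ = ∑' n, ‖x n‖ * ‖y n‖

/-- `(X × Y, ℝ)` has property L_{o,o} for bilinear forms. -/
def BilinLoo (X Y : Type*) [NormedAddCommGroup X] [NormedSpace ℝ X]
    [NormedAddCommGroup Y] [NormedSpace ℝ Y] : Prop :=
  ∀ B : X →L[ℝ] Y →L[ℝ] ℝ, ‖B‖ = 1 → ∀ ε : ℝ, 0 < ε → ∃ η : ℝ, 0 < η ∧
    ∀ (x : X) (y : Y), ‖x‖ = 1 → ‖y‖ = 1 → 1 - η < |B x y| →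
      ∃ (x₀ : X) (y₀ : Y), ‖x₀‖ = 1 ∧ ‖y₀‖ = 1 ∧ |B x₀ y₀| = 1 ∧
        ‖x - x₀‖ < ε ∧ ‖y - y₀‖ < ε

/-!
Given `z ≠ 0`, take a bilinear form `B` of norm one norming `z` (the dual of `X ⊗π Y` is the
space of bounded bilinear forms) and a representation `z = ∑ xₙ ⊗ yₙ` whose cost
`∑ ‖xₙ‖‖yₙ‖` exceeds `‖z‖` by little. Then the total defect `∑ (‖xₙ‖‖yₙ‖ - B(xₙ, yₙ))` is small,
so apart from a small part of the cost every normalised pair `(xₙ/‖xₙ‖, yₙ/‖yₙ‖)` almost norms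
`B`. Property L_{o,o} moves each such pair to a nearby pair at which `B` equals one, and the
remaining terms are dropped. On the resulting tensor `z'` the form `B` takes the value of the cost
of its representation, which forces that representation to be optimal; and `z'` is close to `z`.
-/

section

variable {X Y Z : Type*} [NormedAddCommGroup X] [NormedSpace ℝ X]
  [NormedAddCommGroup Y] [NormedSpace ℝ Y] [NormedAddCommGroup Z] [NormedSpace ℝ Z]

theorem norm_apply_sub_apply_le (f : X →L[ℝ] Y →L[ℝ] Z) (hf : ∀ x y, ‖f x y‖ ≤ ‖x‖ * ‖y‖)
    (x x₀ : X) (y y₀ : Y) : ‖f x y - f x₀ y₀‖ ≤ ‖x - x₀‖ * ‖y‖ + ‖x₀‖ * ‖y - y₀‖ :=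
  calc ‖f x y - f x₀ y₀‖ = ‖f (x - x₀) y + f x₀ (y - y₀)‖ := by
        simp only [map_sub, sub_apply, sub_add_sub_cancel]
    _ ≤ ‖x - x₀‖ * ‖y‖ + ‖x₀‖ * ‖y - y₀‖ := (norm_add_le _ _).trans (add_le_add (hf _ _) (hf _ _))

/-- The signed form of the modulus `η(ε, B)` of property L_{o,o}. -/
def IsLooModulus (B : X →L[ℝ] Y →L[ℝ] ℝ) (ε η : ℝ) : Prop :=
  ∀ (x : X) (y : Y), ‖x‖ = 1 → ‖y‖ = 1 → 1 - η < B x y →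
    ∃ (x₀ : X) (y₀ : Y), ‖x₀‖ = 1 ∧ ‖y₀‖ = 1 ∧ B x₀ y₀ = 1 ∧ ‖x - x₀‖ < ε ∧ ‖y - y₀‖ < ε

theorem BilinLoo.exists_isLooModulus (hL : BilinLoo X Y) {B : X →L[ℝ] Y →L[ℝ] ℝ} (hB : ‖B‖ = 1)
    {ε : ℝ} (hε : 0 < ε) : ∃ η > 0, IsLooModulus B ε η := by
  obtain ⟨η, hη, hLη⟩ := hL B hB (min ε (1 / 4)) (by positivity)
  refine ⟨min η (1 / 2), by positivity, fun x y hx hy hxy => ?_⟩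
  have hxy' : 1 - η < |B x y| :=
    (sub_le_sub_left (min_le_left _ _) 1).trans_lt (hxy.trans_le (le_abs_self _))
  obtain ⟨x₀, y₀, hx₀, hy₀, hB₀, hxx₀, hyy₀⟩ := hLη x y hx hy hxy'
  have hclose : |B x y - B x₀ y₀| ≤ ‖x - x₀‖ + ‖y - y₀‖ := by
    have := norm_apply_sub_apply_le B (fun u v => by simpa [hB] using B.le_opNorm₂ u v) x x₀ y y₀
    rwa [hy, hx₀, mul_one, one_mul, Real.norm_eq_abs] at this
  -- `B x y > 1/2` and the perturbation moves it by less than `1/2`, which rules out `-1`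
  have hpos : 0 < B x₀ y₀ := by
    have := min_le_right ε (1 / 4)
    have := min_le_right η (1 / 2)
    linarith [(abs_le.mp hclose).2]
  exact ⟨x₀, y₀, hx₀, hy₀, by rwa [abs_of_pos hpos] at hB₀,
    hxx₀.trans_le (min_le_left _ _), hyy₀.trans_le (min_le_left _ _)⟩

theorem exists_near_pair_apply_eq_norm_mul_norm (t : X →L[ℝ] Y →L[ℝ] Z)
    (ht : ∀ x y, ‖t x y‖ ≤ ‖x‖ * ‖y‖) {B : X →L[ℝ] Y →L[ℝ] ℝ} (hB : ‖B‖ ≤ 1) {ε η : ℝ}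
    (hε : 0 ≤ ε) (hη : 0 < η) (hBη : IsLooModulus B ε η) (x : X) (y : Y) :
    ∃ (a : X) (b : Y), ‖a‖ * ‖b‖ ≤ ‖x‖ * ‖y‖ ∧ B a b = ‖a‖ * ‖b‖ ∧
      ‖t x y - t a b‖ ≤ 2 * ε * (‖x‖ * ‖y‖) + η⁻¹ * (‖x‖ * ‖y‖ - B x y) := by
  have hBxy : B x y ≤ ‖x‖ * ‖y‖ :=
    calc B x y ≤ ‖B x y‖ := Real.le_norm_self _
      _ ≤ ‖B‖ * ‖x‖ * ‖y‖ := B.le_opNorm₂ x y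
      _ ≤ ‖x‖ * ‖y‖ := by rw [mul_assoc]; exact mul_le_of_le_one_left (by positivity) hB
  have hdefect : 0 ≤ η⁻¹ * (‖x‖ * ‖y‖ - B x y) :=
    mul_nonneg (inv_nonneg.mpr hη.le) (sub_nonneg.mpr hBxy)
  by_cases hgood : (1 - η) * (‖x‖ * ‖y‖) < B x y
  · have hx : x ≠ 0 := by rintro rfl; simp at hgood
    have hy : y ≠ 0 := by rintro rfl; simp at hgood
    have hxy : 1 - η < B (‖x‖⁻¹ • x) (‖y‖⁻¹ • y) := by
      have hxy₀ : B (‖x‖⁻¹ • x) (‖y‖⁻¹ • y) = B x y / (‖x‖ * ‖y‖) := by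
        simp only [map_smul, smul_apply, smul_eq_mul]
        field_simp
      rwa [hxy₀, lt_div_iff₀ (by positivity)]
    obtain ⟨u₀, v₀, hu₀, hv₀, hB₀, hu, hv⟩ := hBη (‖x‖⁻¹ • x) (‖y‖⁻¹ • y)
      (norm_smul_inv_norm hx) (norm_smul_inv_norm hy) hxy
    refine ⟨‖x‖ • u₀, ‖y‖ • v₀, by simp [norm_smul, hu₀, hv₀],
      by simp [norm_smul, hu₀, hv₀, hB₀, mul_comm], ?_⟩
    have hxu : x - ‖x‖ • u₀ = ‖x‖ • (‖x‖⁻¹ • x - u₀) := by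
      rw [smul_sub, smul_inv_smul₀ (norm_ne_zero_iff.mpr hx)]
    have hyv : y - ‖y‖ • v₀ = ‖y‖ • (‖y‖⁻¹ • y - v₀) := by
      rw [smul_sub, smul_inv_smul₀ (norm_ne_zero_iff.mpr hy)]
    calc ‖t x y - t (‖x‖ • u₀) (‖y‖ • v₀)‖
        ≤ ‖x - ‖x‖ • u₀‖ * ‖y‖ + ‖‖x‖ • u₀‖ * ‖y - ‖y‖ • v₀‖ := norm_apply_sub_apply_le t ht _ _ _ _
      _ = ‖x‖ * ‖y‖ * (‖‖x‖⁻¹ • x - u₀‖ + ‖‖y‖⁻¹ • y - v₀‖) := by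
        rw [hxu, hyv, norm_smul, norm_smul, norm_smul, hu₀, norm_norm, norm_norm]; ring
      _ ≤ ‖x‖ * ‖y‖ * (ε + ε) := by gcongr
      _ ≤ 2 * ε * (‖x‖ * ‖y‖) + η⁻¹ * (‖x‖ * ‖y‖ - B x y) := by linarith
  · refine ⟨0, 0, by simpa using mul_nonneg (norm_nonneg x) (norm_nonneg y), by simp, ?_⟩
    have hbad : ‖x‖ * ‖y‖ ≤ η⁻¹ * (‖x‖ * ‖y‖ - B x y) := by
      rw [inv_mul_eq_div, le_div_iff₀ hη]
      linarith [not_lt.mp hgood]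
    calc ‖t x y - t 0 0‖ = ‖t x y‖ := by simp
      _ ≤ η⁻¹ * (‖x‖ * ‖y‖ - B x y) := (ht x y).trans hbad
      _ ≤ 2 * ε * (‖x‖ * ‖y‖) + η⁻¹ * (‖x‖ * ‖y‖ - B x y) :=
        le_add_of_nonneg_left (mul_nonneg (by linarith) (by positivity))

namespace IsProjTensorProduct

variable {t : X →L[ℝ] Y →L[ℝ] Z} {lift : (X →L[ℝ] (Y →L[ℝ] ℝ)) → (Z →L[ℝ] ℝ)}

theorem norm_le_tsum (h : IsProjTensorProduct X Y Z t lift) {x : ℕ → X} {y : ℕ → Y} {z : Z}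
    (hs : Summable fun n => ‖x n‖ * ‖y n‖) (hz : HasSum (fun n => t (x n) (y n)) z) :
    ‖z‖ ≤ ∑' n, ‖x n‖ * ‖y n‖ := by
  rw [h.norm_eq_sInf z]
  refine csInf_le ⟨0, ?_⟩ ⟨x, y, hs, hz, rfl⟩
  rintro _ ⟨x', y', -, -, rfl⟩
  exact tsum_nonneg fun n => by positivity

theorem exists_hasSum_tsum_lt (h : IsProjTensorProduct X Y Z t lift) (z : Z) {δ : ℝ}
    (hδ : 0 < δ) : ∃ (x : ℕ → X) (y : ℕ → Y), Summable (fun n => ‖x n‖ * ‖y n‖) ∧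
      HasSum (fun n => t (x n) (y n)) z ∧ ∑' n, ‖x n‖ * ‖y n‖ < ‖z‖ + δ := by
  obtain ⟨x, y, hs, hz⟩ := h.exists_rep z
  have hlt : sInf _ < ‖z‖ + δ := (h.norm_eq_sInf z).symm.trans_lt (lt_add_of_pos_right _ hδ)
  obtain ⟨_, ⟨x, y, hs, hz, rfl⟩, hlt⟩ :=
    exists_lt_of_csInf_lt (by exact ⟨_, x, y, hs, hz, rfl⟩) hlt
  exact ⟨x, y, hs, hz, hlt⟩

theorem exists_norm_eq_one_lift_apply_eq_norm (h : IsProjTensorProduct X Y Z t lift) {z : Z}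
    (hz : z ≠ 0) : ∃ B, ‖B‖ = 1 ∧ lift B z = ‖z‖ := by
  obtain ⟨φ, hφ, hφz⟩ := exists_dual_vector ℝ z (norm_ne_zero_iff.mpr hz)
  obtain ⟨B, rfl⟩ := h.lift_surjective φ
  exact ⟨B, h.norm_lift B ▸ hφ, hφz⟩

theorem attainsProjNorm_of_hasSum (h : IsProjTensorProduct X Y Z t lift) {φ : Z →L[ℝ] ℝ}
    (hφ : ‖φ‖ ≤ 1) {a : ℕ → X} {b : ℕ → Y} {z : Z} (hs : Summable fun n => ‖a n‖ * ‖b n‖)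
    (hz : HasSum (fun n => t (a n) (b n)) z) (hφab : ∀ n, φ (t (a n) (b n)) = ‖a n‖ * ‖b n‖) :
    AttainsProjNorm t z := by
  refine ⟨a, b, hs, hz, (h.norm_le_tsum hs hz).antisymm ?_⟩
  have hφz : HasSum (fun n => ‖a n‖ * ‖b n‖) (φ z) := by simpa only [hφab] using φ.hasSum hz
  calc ∑' n, ‖a n‖ * ‖b n‖ = φ z := hφz.tsum_eq
    _ ≤ ‖φ‖ * ‖z‖ := (Real.le_norm_self _).trans (φ.le_opNorm z)
    _ ≤ ‖z‖ := mul_le_of_le_one_left (norm_nonneg _) hφ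

theorem exists_attainsProjNorm_norm_sub_le [CompleteSpace Z] (h : IsProjTensorProduct X Y Z t lift)
    {B : X →L[ℝ] Y →L[ℝ] ℝ} (hB : ‖B‖ ≤ 1) {ε η : ℝ} (hε : 0 ≤ ε) (hη : 0 < η)
    (hBη : IsLooModulus B ε η) {x : ℕ → X} {y : ℕ → Y} {z : Z}
    (hs : Summable fun n => ‖x n‖ * ‖y n‖) (hz : HasSum (fun n => t (x n) (y n)) z) :
    ∃ z', AttainsProjNorm t z' ∧
      ‖z - z'‖ ≤ 2 * ε * ∑' n, ‖x n‖ * ‖y n‖ + η⁻¹ * (∑' n, ‖x n‖ * ‖y n‖ - lift B z) := by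
  choose a b hab hBab hdist using fun n =>
    exists_near_pair_apply_eq_norm_mul_norm t h.norm_tmul_le hB hε hη hBη (x n) (y n)
  have hs' : Summable fun n => ‖a n‖ * ‖b n‖ := hs.of_nonneg_of_le (fun n => by positivity) hab
  obtain ⟨z', hz'⟩ : Summable fun n => t (a n) (b n) :=
    hs'.of_norm_bounded fun n => h.norm_tmul_le _ _
  have hBz : HasSum (fun n => B (x n) (y n)) (lift B z) := by
    simpa only [h.lift_tmul] using (lift B).hasSum hz
  refine ⟨z', h.attainsProjNorm_of_hasSum (h.norm_lift B ▸ hB) hs' hz'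
    fun n => by rw [h.lift_tmul, hBab], ?_⟩
  exact (hz.sub hz').norm_le_of_bounded
    ((hs.hasSum.mul_left _).add ((hs.hasSum.sub hBz).mul_left _)) hdist

end IsProjTensorProduct

end

theorem tensor_normAttaining_dense_of_bilinLoo_general
    {X Y Z : Type*} [NormedAddCommGroup X] [NormedSpace ℝ X]
    [NormedAddCommGroup Y] [NormedSpace ℝ Y]
    [NormedAddCommGroup Z] [NormedSpace ℝ Z] [CompleteSpace Z]
    (t : X →L[ℝ] Y →L[ℝ] Z) (lift : (X →L[ℝ] (Y →L[ℝ] ℝ)) → (Z →L[ℝ] ℝ))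
    (h : IsProjTensorProduct X Y Z t lift)
    (hL : BilinLoo X Y) :
    Dense {z : Z | AttainsProjNorm t z} := by
  refine Metric.dense_iff.mpr fun z ε hε => ?_
  rcases eq_or_ne z 0 with rfl | hz
  · exact ⟨0, Metric.mem_ball_self hε, fun _ => 0, fun _ => 0, by simp, by simp, by simp⟩
  obtain ⟨B, hB, hBz⟩ := h.exists_norm_eq_one_lift_apply_eq_norm hz
  have hε₀ : 0 < ε / (4 * (‖z‖ + 1)) := by positivity
  obtain ⟨η, hη, hBη⟩ := hL.exists_isLooModulus hB hε₀
  obtain ⟨x, y, hs, hxy, hS⟩ := h.exists_hasSum_tsum_lt z (δ := min 1 (η * ε / 2)) (by positivity)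
  obtain ⟨z', hz', hzz'⟩ := h.exists_attainsProjNorm_norm_sub_le hB.le hε₀.le hη hBη hs hxy
  refine ⟨z', ?_, hz'⟩
  set S := ∑' n, ‖x n‖ * ‖y n‖
  have hcost : 2 * (ε / (4 * (‖z‖ + 1))) * S < ε / 2 := by
    calc 2 * (ε / (4 * (‖z‖ + 1))) * S < 2 * (ε / (4 * (‖z‖ + 1))) * (‖z‖ + 1) := by
          gcongr; linarith [min_le_left 1 (η * ε / 2)]
      _ = ε / 2 := by field_simp; ring
  have hdefect : η⁻¹ * (S - ‖z‖) < ε / 2 := by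
    rw [inv_mul_eq_div, div_lt_iff₀ hη]
    linarith [min_le_right 1 (η * ε / 2)]
  rw [hBz] at hzz'
  rw [Metric.mem_ball, dist_comm, dist_eq_norm]
  linarith

/-- If `(X × Y, ℝ)` has property L_{o,o} for bilinear forms, then the set of
norm-attaining tensors is dense in `X ⊗π Y`. -/
theorem tensor_normAttaining_dense_of_bilinLoo
    {X Y Z : Type*} [NormedAddCommGroup X] [NormedSpace ℝ X] [CompleteSpace X]
    [NormedAddCommGroup Y] [NormedSpace ℝ Y] [CompleteSpace Y]
    [NormedAddCommGroup Z] [NormedSpace ℝ Z] [CompleteSpace Z]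
    (t : X →L[ℝ] Y →L[ℝ] Z) (lift : (X →L[ℝ] (Y →L[ℝ] ℝ)) → (Z →L[ℝ] ℝ))
    (h : IsProjTensorProduct X Y Z t lift)
    (hL : BilinLoo X Y) :
    Dense {z : Z | AttainsProjNorm t z} :=
  tensor_normAttaining_dense_of_bilinLoo_general t lift h hL
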